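/- arXiv:1906.03991 — 3 statements merged into one kernel-verified Lean document; each statement's English description precedes it below -/
import Mathlib

section
/- Let k ≤ m ≤ n, let S, T be subsets of {1,...,m} each of cardinality at most k with S ≤ T (meaning |S| ≥ |T| and S^i ≤ T^i for i ≤ |T|), and let Ŝ, T̂ denote their (k,m)-completions. Then Ŝ ≤ T̂, i.e., Ŝ^i ≤ T̂^i for all i ∈ {1,...,k}. -/
/-- The `i`-th smallest element (0-indexed) of a finite set of naturals
(`0` if `i` is out of range). -/
def nthEl (S : Finset ℕ) (i : ℕ) : ℕ := (S.sort (· ≤ ·)).getD i 0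

/-- The order on subsets of equal cardinality: `S ≤ T` iff `|S| = |T|` and the `i`-th
smallest element of `S` is at most that of `T`, for all `i`. -/
def FLE (S T : Finset ℕ) : Prop :=
  S.card = T.card ∧ ∀ i < T.card, nthEl S i ≤ nthEl T i

/-- The general order: `S ≤ T` iff `|S| ≥ |T|` and the `i`-th smallest element of `S`
is at most that of `T` for all `i < |T|`. -/
def GLE (S T : Finset ℕ) : Prop :=
  T.card ≤ S.card ∧ ∀ i < T.card, nthEl S i ≤ nthEl T i

/-- A word `w` over `{1,…,n}` is readable from `P` to `Q` if there is a chain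
`P ≤ S₁ ≤ … ≤ S_{|w|} ≤ Q` of subsets of `{1,…,n}` with `wᵢ ∈ Sᵢ` for each `i`. -/
def Readable (n : ℕ) (w : List ℕ) (P Q : Finset ℕ) : Prop :=
  ∃ L : List (Finset ℕ), L.length = w.length ∧ (∀ A ∈ L, A ⊆ Finset.Icc 1 n) ∧
    List.Chain' FLE (P :: (L ++ [Q])) ∧
    ∀ i (h : i < w.length), w.get ⟨i, h⟩ ∈ L.getD i ∅

/-- Tropical (max-plus) product of matrices indexed by subsets of `{1,…,n}`. -/
noncomputable def tmul (n : ℕ) (A B : Finset ℕ → Finset ℕ → WithBot ℝ) :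
    Finset ℕ → Finset ℕ → WithBot ℝ :=
  fun P Q => ((Finset.Icc 1 n).powerset).sup fun R => A P R + B R Q

open Classical in
/-- The image of a generator `x ∈ {1,…,n}` under `ρₙ`. -/
noncomputable def rhoGen (n : ℕ) (x : ℕ) (P Q : Finset ℕ) : WithBot ℝ :=
  if FLE P Q then
    (if ∃ S : Finset ℕ, S ⊆ Finset.Icc 1 n ∧ FLE P S ∧ FLE S Q ∧ x ∈ S then 1 else 0)
  else ⊥

open Classical in
/-- The image of a word under `ρₙ`, extended multiplicatively (the empty word maps to the
matrix with `0` in positions `(P,Q)` with `P ≤ Q` and `-∞` elsewhere). -/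
noncomputable def rhoW (n : ℕ) : List ℕ → Finset ℕ → Finset ℕ → WithBot ℝ
  | [] => fun P Q => if FLE P Q then 0 else ⊥
  | x :: w => tmul n (rhoGen n x) (rhoW n w)

/-- The Knuth relations over `{1,…,n}`. -/
inductive KnuthRel (n : ℕ) : List ℕ → List ℕ → Prop
  | k1 (a b c : ℕ) (h1 : 1 ≤ a) (h2 : a < b) (h3 : b ≤ c) (h4 : c ≤ n) :
      KnuthRel n [b, c, a] [b, a, c]
  | k2 (a b c : ℕ) (h1 : 1 ≤ a) (h2 : a ≤ b) (h3 : b < c) (h4 : c ≤ n) :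
      KnuthRel n [c, a, b] [a, c, b]

/-- The plactic congruence on words: the equivalence generated by applying Knuth
relations inside words. Two words are related iff they represent the same element of
the plactic monoid of rank `n`. -/
def PlacticRel (n : ℕ) : List ℕ → List ℕ → Prop :=
  Relation.EqvGen fun w v => ∃ p s x y, KnuthRel n x y ∧ w = p ++ x ++ s ∧ v = p ++ y ++ s

/-- A semistandard Young tableau over `{1,…,n}`, given by its list of rows
(row 0 is the bottom row): entries lie in `{1,…,n}`, rows weakly increase left to right,
row lengths weakly decrease going up, columns strictly increase going up
(i.e. strictly decrease reading down). -/
structure Tableau (n : ℕ) where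
  rows : List (List ℕ)
  entries_mem : ∀ r ∈ rows, ∀ x ∈ r, x ∈ Finset.Icc 1 n
  row_weak : ∀ r ∈ rows, List.Pairwise (· ≤ ·) r
  shape : ∀ i, (rows.getD (i + 1) []).length ≤ (rows.getD i []).length
  col_strict : ∀ i j, j < (rows.getD (i + 1) []).length →
    (rows.getD i []).getD j 0 < (rows.getD (i + 1) []).getD j 0

/-- The number of occurrences of the symbol `y` in row `x` (rows numbered from 1, from
the bottom) of the tableau `T`. -/
def rowCount {n : ℕ} (T : Tableau n) (x y : ℕ) : ℕ := (T.rows.getD (x - 1) []).count y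

/-- The row reading of a tableau: rows read left to right, from top row to bottom row. -/
def rowReading {n : ℕ} (T : Tableau n) : List ℕ := T.rows.reverse.flatten

/-- The `j`-th column of a tableau, read from top to bottom. -/
def colOf {n : ℕ} (T : Tableau n) (j : ℕ) : List ℕ :=
  ((List.range T.rows.length).reverse).filterMap fun i => (T.rows.getD i [])[j]?

/-- The column reading of a tableau: columns read top to bottom, left to right. -/
def colReading {n : ℕ} (T : Tableau n) : List ℕ :=
  ((List.range ((T.rows.getD 0 []).length)).map (colOf T)).flatten

/-- The `(k,m)`-completion of `S ⊆ {1,…,m}`: adjoin to `S` the `k - |S|` largest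
elements of `{1,…,m} \ S`. -/
def completion (k m : ℕ) (S : Finset ℕ) : Finset ℕ :=
  S ∪ ((((Finset.Icc 1 m) \ S).sort (· ≤ ·)).reverse.take (k - S.card)).toFinset

/-- Tropical (max-plus) product of `n × n` matrices over `ℝ ∪ {-∞}`. -/
noncomputable def tmulF (n : ℕ) (A B : Fin n → Fin n → WithBot ℝ) :
    Fin n → Fin n → WithBot ℝ :=
  fun i j => Finset.univ.sup fun k => A i k + B k j

/-- The tropical identity matrix. -/
noncomputable def tIdF (n : ℕ) : Fin n → Fin n → WithBot ℝ :=
  fun i j => if i = j then (0 : WithBot ℝ) else ⊥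

/-!
Compare subsets through their counting functions `x ↦ #{a ∈ A | a < x}`: when `|T| ≤ |S|`,
`S ≤ T` holds iff `S` counts at least as many elements as `T` below every `x`. Below a given `x`,
the completion `T̂` either adds nothing, so it counts exactly what `T` counts, or it contains all
of `[x, m]`, so it counts `k - (m + 1 - x)`, the least any `k`-subset of `{1,…,m}` can count.
-/

open Finset

lemma nthEl_eq_nth (A : Finset ℕ) (i : ℕ) : nthEl A i = Nat.nth (· ∈ A) i := by
  rw [Nat.nth_eq_getD_sort (p := (· ∈ A)) A.finite_toSet, finite_toSet_toFinset]
  rfl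

lemma count_mem_eq_card_filter_lt (A : Finset ℕ) (x : ℕ) :
    Nat.count (· ∈ A) x = #{a ∈ A | a < x} := by
  rw [Nat.count_eq_card_filter_range]
  congr 1
  ext a
  simp [and_comm]

lemma nthEl_lt_iff {A : Finset ℕ} {i : ℕ} (hi : i < #A) (x : ℕ) :
    nthEl A i < x ↔ i < #{a ∈ A | a < x} := by
  have hi' : ∀ hf : (Set.ofPred (· ∈ A)).Finite, i < #hf.toFinset := fun hf => by
    simpa [Set.Finite.toFinset] using hi
  rw [nthEl_eq_nth, ← count_mem_eq_card_filter_lt]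
  refine ⟨fun h => ?_, Nat.nth_lt_of_lt_count⟩
  calc i < Nat.count (· ∈ A) (Nat.nth (· ∈ A) i + 1) := by rw [Nat.count_nth_succ hi']; omega
    _ ≤ Nat.count (· ∈ A) x := Nat.count_monotone _ h

lemma GLE_iff_card_filter_lt_le {S T : Finset ℕ} (hTS : #T ≤ #S) :
    GLE S T ↔ ∀ x, #{t ∈ T | t < x} ≤ #{s ∈ S | s < x} := by
  refine ⟨fun h x => ?_, fun h => ⟨hTS, fun i hi => ?_⟩⟩
  · by_contra! hlt
    set i := #{s ∈ S | s < x}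
    have hiT : i < #T := hlt.trans_le (card_filter_le _ _)
    have hTi : nthEl T i < x := (nthEl_lt_iff hiT x).2 hlt
    exact lt_irrefl i ((nthEl_lt_iff (hiT.trans_le hTS) x).1 ((h.2 i hiT).trans_lt hTi))
  · rw [← Nat.lt_succ_iff, nthEl_lt_iff (hi.trans_le hTS)]
    exact ((nthEl_lt_iff hi _).1 (Nat.lt_succ_self _)).trans_le (h _)

section LargestElements

variable {α : Type*} [LinearOrder α] (C : Finset α) (j : ℕ)

lemma nodup_take_reverse_sort : ((C.sort (· ≤ ·)).reverse.take j).Nodup :=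
  (List.nodup_reverse.2 (C.sort_nodup _)).sublist (List.take_sublist _ _)

lemma length_take_reverse_sort : ((C.sort (· ≤ ·)).reverse.take j).length = min j #C := by
  rw [List.length_take, List.length_reverse, length_sort]

lemma mem_of_mem_take_reverse_sort {y : α} (hy : y ∈ (C.sort (· ≤ ·)).reverse.take j) : y ∈ C :=
  (mem_sort _).1 (List.mem_reverse.1 ((List.take_sublist _ _).subset hy))

lemma mem_take_reverse_sort_of_lt {e y : α} (he : e ∈ (C.sort (· ≤ ·)).reverse.take j)
    (hy : y ∈ C) (hey : e < y) : y ∈ (C.sort (· ≤ ·)).reverse.take j := by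
  have hdesc : ((C.sort (· ≤ ·)).reverse).Pairwise (· > ·) :=
    List.pairwise_reverse.2 (C.sortedLT_sort).pairwise
  rw [← List.take_append_drop j (C.sort (· ≤ ·)).reverse, List.pairwise_append] at hdesc
  have hy' : y ∈ (C.sort (· ≤ ·)).reverse := List.mem_reverse.2 ((mem_sort _).2 hy)
  rw [← List.take_append_drop j (C.sort (· ≤ ·)).reverse, List.mem_append] at hy'
  exact hy'.resolve_right fun hyd => (hdesc.2.2 e he y hyd).not_gt hey

end LargestElements

lemma card_le_card_filter_lt_add {A : Finset ℕ} {m : ℕ} (hA : A ⊆ Icc 1 m) (x : ℕ) :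
    #A ≤ #{a ∈ A | a < x} + (m + 1 - x) := by
  have hge : {a ∈ A | ¬a < x} ⊆ Icc x m := fun a ha =>
    mem_Icc.2 ⟨not_lt.1 (mem_filter.1 ha).2, (mem_Icc.1 (hA (mem_filter.1 ha).1)).2⟩
  have := card_le_card hge
  rw [Nat.card_Icc] at this
  have := card_filter_add_card_filter_not (s := A) (p := (· < x))
  omega

lemma card_filter_lt_add_le_card {A : Finset ℕ} {x m : ℕ} (hA : Icc x m ⊆ A) :
    #{a ∈ A | a < x} + (m + 1 - x) ≤ #A := by
  have hge : Icc x m ⊆ {a ∈ A | ¬a < x} := fun a ha =>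
    mem_filter.2 ⟨hA ha, not_lt.2 (mem_Icc.1 ha).1⟩
  have := card_le_card hge
  rw [Nat.card_Icc] at this
  have := card_filter_add_card_filter_not (s := A) (p := (· < x))
  omega

lemma card_completion {k m : ℕ} {S : Finset ℕ} (hS : S ⊆ Icc 1 m) (hSk : #S ≤ k) (hkm : k ≤ m) :
    #(completion k m S) = k := by
  have hdisj : Disjoint S (((Icc 1 m \ S).sort (· ≤ ·)).reverse.take (k - #S)).toFinset :=
    disjoint_right.2 fun y hy =>
      (mem_sdiff.1 (mem_of_mem_take_reverse_sort _ _ (List.mem_toFinset.1 hy))).2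
  rw [completion, card_union_of_disjoint hdisj,
    List.toFinset_card_of_nodup (nodup_take_reverse_sort _ _), length_take_reverse_sort,
    card_sdiff_of_subset hS, Nat.card_Icc]
  omega

lemma completion_subset_Icc (k : ℕ) {m : ℕ} {S : Finset ℕ} (hS : S ⊆ Icc 1 m) :
    completion k m S ⊆ Icc 1 m :=
  union_subset hS fun _ hy =>
    (mem_sdiff.1 (mem_of_mem_take_reverse_sort _ _ (List.mem_toFinset.1 hy))).1

lemma filter_completion_lt_eq_or_Icc_subset (k m : ℕ) (S : Finset ℕ) (x : ℕ) :
    {a ∈ completion k m S | a < x} = {a ∈ S | a < x} ∨ Icc x m ⊆ completion k m S := by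
  set E := ((Icc 1 m \ S).sort (· ≤ ·)).reverse.take (k - #S)
  obtain hE | ⟨e, he⟩ := ({a ∈ E.toFinset | a < x}).eq_empty_or_nonempty
  · left
    rw [completion, filter_union, hE, union_empty]
  right
  intro y hy
  by_cases hyS : y ∈ S
  · exact mem_union_left _ hyS
  rw [mem_filter, List.mem_toFinset] at he
  have he1 : 1 ≤ e := (mem_Icc.1 (mem_sdiff.1 (mem_of_mem_take_reverse_sort _ _ he.1)).1).1
  have hyC : y ∈ Icc 1 m \ S := mem_sdiff.2 ⟨mem_Icc.2 ⟨by grind, (mem_Icc.1 hy).2⟩, hyS⟩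
  exact mem_union_right _ (List.mem_toFinset.2
    (mem_take_reverse_sort_of_lt _ _ he.1 hyC (he.2.trans_le (mem_Icc.1 hy).1)))

lemma GLE_completion {k m : ℕ} {S T : Finset ℕ} (hkm : k ≤ m) (hS : S ⊆ Icc 1 m)
    (hT : T ⊆ Icc 1 m) (hSk : #S ≤ k) (hTk : #T ≤ k) (h : GLE S T) :
    GLE (completion k m S) (completion k m T) := by
  have hcardS := card_completion hS hSk hkm
  have hcardT := card_completion hT hTk hkm
  have hcount := (GLE_iff_card_filter_lt_le h.1).1 h
  refine (GLE_iff_card_filter_lt_le (hcardT.trans hcardS.symm).le).2 fun x => ?_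
  rcases filter_completion_lt_eq_or_Icc_subset k m T x with heq | hsub
  · rw [heq]
    exact (hcount x).trans (card_le_card (filter_subset_filter _ subset_union_left))
  · have := card_filter_lt_add_le_card hsub
    have := card_le_card_filter_lt_add (completion_subset_Icc k hS) x
    omega

theorem stmt4_general (k m : ℕ) (hkm : k ≤ m) (S T : Finset ℕ)
    (hS : S ⊆ Finset.Icc 1 m) (hT : T ⊆ Finset.Icc 1 m)
    (hSk : S.card ≤ k) (hTk : T.card ≤ k) (h : GLE S T) :
    (completion k m S).card = k ∧ (completion k m T).card = k ∧
      ∀ i < k, nthEl (completion k m S) i ≤ nthEl (completion k m T) i := by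
  have hcardT := card_completion hT hTk hkm
  refine ⟨card_completion hS hSk hkm, hcardT, fun i hi => ?_⟩
  exact (GLE_completion hkm hS hT hSk hTk h).2 i (hcardT.symm ▸ hi)

/-- if `k ≤ m ≤ n`, `S, T ⊆ {1,…,m}` have cardinality at most `k` and
`S ≤ T` in the general order, then the `(k,m)`-completions satisfy `Ŝ ≤ T̂`, i.e.
`Ŝⁱ ≤ T̂ⁱ` for all `i ∈ {1,…,k}`. -/
theorem stmt4 (n k m : ℕ) (hkm : k ≤ m) (hmn : m ≤ n) (S T : Finset ℕ)
    (hS : S ⊆ Finset.Icc 1 m) (hT : T ⊆ Finset.Icc 1 m)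
    (hSk : S.card ≤ k) (hTk : T.card ≤ k) (h : GLE S T) :
    (completion k m S).card = k ∧ (completion k m T).card = k ∧
      ∀ i < k, nthEl (completion k m S) i ≤ nthEl (completion k m T) i :=
  stmt4_general k m hkm S T hS hT hSk hTk h
end

section
/- The map ρ_n, defined on generators x ∈ {1,...,n} by ρ_n(x)_{P,Q} = −∞ if |P| ≠ |Q| or P ≰ Q, ρ_n(x)_{P,Q} = 1 if |P| = |Q|, P ≤ Q and x belongs to the union of the order interval [P,Q], and 0 otherwise, and extended multiplicatively to words, satisfies: for every word w over {1,...,n} and every pair P, Q of subsets with |P| = |Q| and P ≤ Q, the entry ρ_n(w)_{P,Q} equals the maximum length of a scattered subword of w that can be read from P to Q. -/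
/-!
Induction on the word: `ρₙ(x w)_{P,Q} = max_R (ρₙ(x)_{P,R} + ρₙ(w)_{R,Q})`, and the maximal
length of a subword of `x w` readable from `P` to `Q` obeys the same recursion.
A subword that skips `x` is readable from `P` to `Q` through `R = P`, where `ρₙ(x)_{P,P} ≥ 0`.
A subword that starts with `x` reads `x` in some `S ≥ P` and the rest from `S`, and
`ρₙ(x)_{P,S} = 1`. Conversely `ρₙ(x)_{P,R} = 1` means that `x` lies in some `S` with
`P ≤ S ≤ R`, and since readability from `R` implies readability from any `S ≤ R`, `x`
followed by a subword readable from `R` is readable from `P`.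
-/

theorem FLE_refl (S : Finset ℕ) : FLE S S := ⟨rfl, fun _ _ => le_rfl⟩

theorem FLE_trans {S T U : Finset ℕ} (h₁ : FLE S T) (h₂ : FLE T U) : FLE S U :=
  ⟨h₁.1.trans h₂.1, fun i hi => (h₁.2 i (h₂.1 ▸ hi)).trans (h₂.2 i hi)⟩

instance : IsTrans (Finset ℕ) FLE := ⟨fun _ _ _ => FLE_trans⟩

section Readable

variable {n : ℕ} {x : ℕ} {u : List ℕ} {P Q : Finset ℕ}

theorem readable_nil (h : FLE P Q) : Readable n [] P Q :=
  ⟨[], rfl, by simp, List.isChain_pair.mpr h, by simp⟩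

theorem FLE_of_readable (h : Readable n u P Q) : FLE P Q := by
  obtain ⟨L, -, -, hchain, -⟩ := h
  exact List.rel_of_pairwise_cons (List.isChain_iff_pairwise.mp hchain)
    (List.mem_append_right _ (List.mem_singleton_self Q))

theorem Readable.mono_left {P' : Finset ℕ} (h : FLE P P') (hr : Readable n u P' Q) :
    Readable n u P Q := by
  obtain ⟨L, hlen, hmem, hchain, hget⟩ := hr
  replace hchain := List.isChain_cons.mp hchain
  exact ⟨L, hlen, hmem, List.isChain_cons.mpr
    ⟨fun y hy => FLE_trans h (hchain.1 y hy), hchain.2⟩, hget⟩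

theorem readable_cons_iff :
    Readable n (x :: u) P Q ↔
      ∃ S ⊆ Finset.Icc 1 n, FLE P S ∧ x ∈ S ∧ Readable n u S Q := by
  constructor
  · rintro ⟨_ | ⟨S, L⟩, hlen, hmem, hchain, hget⟩
    · simp at hlen
    replace hchain := List.isChain_cons_cons.mp hchain
    refine ⟨S, hmem S List.mem_cons_self, hchain.1, by simpa using hget 0 (by simp), L,
      by simpa using hlen, fun A hA => hmem A (List.mem_cons_of_mem _ hA), hchain.2,
      fun i hi => ?_⟩
    simpa using hget (i + 1) (by simpa using hi)
  · rintro ⟨S, hS, hPS, hxS, L, hlen, hmem, hchain, hget⟩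
    refine ⟨S :: L, by simpa using hlen, ?_, List.isChain_cons_cons.mpr ⟨hPS, hchain⟩, ?_⟩
    · simpa [List.forall_mem_cons] using ⟨hS, hmem⟩
    · rintro (_ | i) hi
      · simpa using hxS
      · simpa using hget i (by simpa using hi)

end Readable

open Classical in
noncomputable def maxReadableLength (n : ℕ) (w : List ℕ) (P Q : Finset ℕ) : ℕ :=
  Nat.findGreatest (fun k => ∃ u : List ℕ, u.Sublist w ∧ u.length = k ∧ Readable n u P Q)
    w.length

section MaxReadableLength

variable {n : ℕ} {w u : List ℕ} {P Q : Finset ℕ}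

theorem exists_sublist_readable_length_eq_maxReadableLength (hPQ : FLE P Q) :
    ∃ u : List ℕ, u.Sublist w ∧ u.length = maxReadableLength n w P Q ∧ Readable n u P Q := by
  classical
  exact Nat.findGreatest_spec
    (P := fun k => ∃ u : List ℕ, u.Sublist w ∧ u.length = k ∧ Readable n u P Q)
    (Nat.zero_le _) ⟨[], List.nil_sublist w, rfl, readable_nil hPQ⟩

theorem length_le_maxReadableLength (hu : u.Sublist w) (hr : Readable n u P Q) :
    u.length ≤ maxReadableLength n w P Q := by
  classical
  exact Nat.le_findGreatest hu.length_le ⟨u, hu, rfl, hr⟩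

theorem maxReadableLength_nil : maxReadableLength n [] P Q = 0 := by
  classical
  exact Nat.le_zero.mp (Nat.findGreatest_le _)

end MaxReadableLength

section Rho

variable {n x : ℕ} {P Q R : Finset ℕ}

theorem rhoW_eq_bot_of_not_FLE (w : List ℕ) (h : ¬ FLE P Q) : rhoW n w P Q = ⊥ := by
  induction w generalizing P with
  | nil => simp [rhoW, h]
  | cons y w ih =>
    simp only [rhoW, tmul]
    refine eq_bot_iff.mpr (Finset.sup_le fun R _ => ?_)
    by_cases hPR : FLE P R
    · rw [ih fun hRQ => h (FLE_trans hPR hRQ), WithBot.add_bot]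
    · rw [rhoGen, if_neg hPR, WithBot.bot_add]

theorem rhoGen_nonneg (h : FLE P R) : (0 : WithBot ℝ) ≤ rhoGen n x P R := by
  rw [rhoGen, if_pos h]
  split_ifs <;> norm_num

theorem rhoGen_eq_one (hR : R ⊆ Finset.Icc 1 n) (hPR : FLE P R) (hx : x ∈ R) :
    rhoGen n x P R = 1 := by
  rw [rhoGen, if_pos hPR, if_pos ⟨R, hR, hPR, FLE_refl R, hx⟩]

theorem rhoGen_add_maxReadableLength_le (w : List ℕ) (hPR : FLE P R) (hRQ : FLE R Q) :
    rhoGen n x P R + (maxReadableLength n w R Q : WithBot ℝ) ≤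
      maxReadableLength n (x :: w) P Q := by
  obtain ⟨u, hu, hlen, hr⟩ := exists_sublist_readable_length_eq_maxReadableLength
    (n := n) (w := w) hRQ
  rw [rhoGen, if_pos hPR, ← hlen]
  split_ifs with hx
  · obtain ⟨S, hS, hPS, hSR, hxS⟩ := hx
    have hxu : Readable n (x :: u) P Q :=
      readable_cons_iff.mpr ⟨S, hS, hPS, hxS, hr.mono_left hSR⟩
    rw [add_comm]
    exact_mod_cast length_le_maxReadableLength (hu.cons_cons x) hxu
  · rw [zero_add]
    exact_mod_cast length_le_maxReadableLength (hu.cons x) (hr.mono_left hPR)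

theorem exists_le_rhoGen_add_maxReadableLength (w : List ℕ) (hP : P ⊆ Finset.Icc 1 n)
    (hPQ : FLE P Q) :
    ∃ R ⊆ Finset.Icc 1 n, FLE R Q ∧
      (maxReadableLength n (x :: w) P Q : WithBot ℝ) ≤
        rhoGen n x P R + maxReadableLength n w R Q := by
  obtain ⟨u, hu, hlen, hr⟩ := exists_sublist_readable_length_eq_maxReadableLength
    (n := n) (w := x :: w) hPQ
  rw [← hlen]
  cases hu with
  | cons _ hskip =>
    refine ⟨P, hP, hPQ, ?_⟩
    calc (u.length : WithBot ℝ) = 0 + (u.length : WithBot ℝ) := (zero_add _).symm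
      _ ≤ _ := add_le_add (rhoGen_nonneg (FLE_refl P))
          (by exact_mod_cast length_le_maxReadableLength hskip hr)
  | cons_cons _ hread =>
    obtain ⟨S, hS, hPS, hxS, hr'⟩ := readable_cons_iff.mp hr
    refine ⟨S, hS, FLE_of_readable hr', ?_⟩
    rw [rhoGen_eq_one hS hPS hxS, List.length_cons, Nat.cast_succ, add_comm]
    exact add_le_add_right (by exact_mod_cast length_le_maxReadableLength hread hr') 1

theorem rhoW_eq_maxReadableLength (w : List ℕ) (hP : P ⊆ Finset.Icc 1 n) (hPQ : FLE P Q) :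
    rhoW n w P Q = maxReadableLength n w P Q := by
  induction w generalizing P with
  | nil => simp [maxReadableLength_nil, rhoW, hPQ]
  | cons x w ih =>
    simp only [rhoW, tmul]
    refine le_antisymm (Finset.sup_le fun R hR => ?_) ?_
    · by_cases hPR : FLE P R
      · by_cases hRQ : FLE R Q
        · rw [ih (Finset.mem_powerset.mp hR) hRQ]
          exact rhoGen_add_maxReadableLength_le w hPR hRQ
        · rw [rhoW_eq_bot_of_not_FLE w hRQ, WithBot.add_bot]
          exact bot_le
      · rw [rhoGen, if_neg hPR, WithBot.bot_add]
        exact bot_le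
    · obtain ⟨R, hR, hRQ, hle⟩ := exists_le_rhoGen_add_maxReadableLength (x := x) w hP hPQ
      rw [← ih hR hRQ] at hle
      exact hle.trans (Finset.le_sup (f := fun R => rhoGen n x P R + rhoW n w R Q)
        (Finset.mem_powerset.mpr hR))

end Rho

theorem stmt6_general (n : ℕ) (w : List ℕ)
    (P Q : Finset ℕ) (hP : P ⊆ Finset.Icc 1 n)
    (hPQ : FLE P Q) :
    ∃ m : ℕ,
      (∃ u : List ℕ, u.Sublist w ∧ u.length = m ∧ Readable n u P Q) ∧
      (∀ u : List ℕ, u.Sublist w → Readable n u P Q → u.length ≤ m) ∧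
      rhoW n w P Q = (m : WithBot ℝ) :=
  ⟨maxReadableLength n w P Q, exists_sublist_readable_length_eq_maxReadableLength hPQ,
    fun _ hu hr => length_le_maxReadableLength hu hr, rhoW_eq_maxReadableLength w hP hPQ⟩

/-- for every word `w` over `{1,…,n}` and all subsets `P, Q` with
`|P| = |Q|` and `P ≤ Q`, the entry `ρₙ(w)_{P,Q}` equals the maximum length of a
scattered subword of `w` that can be read from `P` to `Q`. -/
theorem stmt6 (n : ℕ) (w : List ℕ) (hw : ∀ x ∈ w, x ∈ Finset.Icc 1 n)
    (P Q : Finset ℕ) (hP : P ⊆ Finset.Icc 1 n) (hQ : Q ⊆ Finset.Icc 1 n)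
    (hPQ : FLE P Q) :
    ∃ m : ℕ,
      (∃ u : List ℕ, u.Sublist w ∧ u.length = m ∧ Readable n u P Q) ∧
      (∀ u : List ℕ, u.Sublist w → Readable n u P Q → u.length ≤ m) ∧
      rhoW n w P Q = (m : WithBot ℝ) :=
  stmt6_general n w P Q hP hPQ
end

section
/- For each Knuth relation u = v, and all subsets P, Q of {1,...,n} with |P| = |Q|, the word u can be read from P to Q if and only if v can be read from P to Q. Concretely: for a < b ≤ c, bca is readable from P to Q iff bac is; and for a ≤ b < c, cab is readable from P to Q iff acb is. -/
/-!
Listing a `k`-subset increasingly identifies it with a strictly increasing map `Fin k → ℕ`, and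
the order on `k`-subsets becomes the pointwise order; in particular `k`-subsets form a lattice
under pointwise `max` and `min`. Each implication is an explicit surgery on a reading chain
`p ≤ s₁ ≤ s₂ ≤ s₃ ≤ q`: the letter to be moved is planted into a neighbouring tuple by
overwriting its last entry below the letter (or its first entry above it), which keeps the tuple
strictly increasing, and the chain is repaired by a pointwise `max` or `min` with the old tuples.
The strict inequality of the Knuth relation keeps the overwritten position away from the position
carrying the letter that has to survive that `max` or `min`.
-/

open Function

section
variable {α β : Type*} [LinearOrder α] [LinearOrder β] {f g : α → β}

lemma StrictMono.sup (hf : StrictMono f) (hg : StrictMono g) : StrictMono (f ⊔ g) :=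
  fun _ _ h => max_lt_max (hf h) (hg h)

lemma StrictMono.inf (hf : StrictMono f) (hg : StrictMono g) : StrictMono (f ⊓ g) :=
  fun _ _ h => min_lt_min (hf h) (hg h)

lemma StrictMono.update_of_lt_of_lt (hf : StrictMono f) {m : α} {x : β}
    (hlt : ∀ j < m, f j < x) (hgt : ∀ j, m < j → x < f j) : StrictMono (update f m x) := by
  intro i j hij
  rcases eq_or_ne i m with rfl | hi
  · rw [update_self, update_of_ne hij.ne']
    exact hgt j hij
  rcases eq_or_ne j m with rfl | hj
  · rw [update_self, update_of_ne hi]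
    exact hlt i hij
  rw [update_of_ne hi, update_of_ne hj]
  exact hf hij

def ChainReadable (x y z : β) (p q : α → β) : Prop :=
  ∃ f g h : α → β, StrictMono f ∧ StrictMono g ∧ StrictMono h ∧
    p ≤ f ∧ f ≤ g ∧ g ≤ h ∧ h ≤ q ∧ x ∈ Set.range f ∧ y ∈ Set.range g ∧ z ∈ Set.range h

variable [Fintype α]

lemma StrictMono.exists_update_of_le (hf : StrictMono f) {x : β} {i : α} (hi : f i ≤ x) :
    ∃ m, f m ≤ x ∧ (∀ j, f j ≤ x → j ≤ m) ∧ StrictMono (update f m x) := by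
  classical
  set s := Finset.univ.filter fun j => f j ≤ x
  have hs : s.Nonempty := ⟨i, by simpa [s] using hi⟩
  set m := s.max' hs
  have hm : f m ≤ x := by simpa [s] using s.max'_mem hs
  have hle : ∀ j, f j ≤ x → j ≤ m := fun j hj => s.le_max' j (by simpa [s] using hj)
  refine ⟨m, hm, hle, hf.update_of_lt_of_lt (fun j hj => (hf hj).trans_le hm) fun j hj => ?_⟩
  exact not_le.1 fun h => hj.not_ge (hle j h)

lemma StrictMono.exists_update_of_ge (hf : StrictMono f) {x : β} {i : α} (hi : x ≤ f i) :
    ∃ m, x ≤ f m ∧ (∀ j, x ≤ f j → m ≤ j) ∧ StrictMono (update f m x) := by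
  obtain ⟨m, hm, hmin, hmono⟩ := hf.dual.exists_update_of_le (i := OrderDual.toDual i) hi
  exact ⟨m, hm, hmin, fun a b hab => hmono (show OrderDual.toDual b < OrderDual.toDual a from hab)⟩

variable {p q : α → β} {a b c : β}

lemma ChainReadable.bca_of_bac (hab : a < b) (hbc : b ≤ c) (hr : ChainReadable b a c p q) :
    ChainReadable b c a p q := by
  obtain ⟨s₁, s₂, s₃, h₁, h₂, h₃, hp₁, h₁₂, h₂₃, h₃q, ⟨i, hi⟩, ⟨j, hj⟩, ⟨m, hm⟩⟩ := hr
  obtain ⟨m', hm'c, hmax, ht⟩ := h₁.exists_update_of_le (hi.trans_le hbc)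
  have hji : j < m' := by
    refine lt_of_lt_of_le (h₂.lt_iff_lt.1 ?_) (hmax i (hi.trans_le hbc))
    rw [hj]
    exact hab.trans_le (hi ▸ h₁₂ i)
  have hmm' : m ≤ m' := hmax m (hm ▸ (h₁₂.trans h₂₃) m)
  have ht₃ : update s₁ m' c ≤ s₃ :=
    update_le_iff.2 ⟨hm ▸ h₃.monotone hmm', fun l _ => (h₁₂.trans h₂₃) l⟩
  refine ⟨s₁, update s₁ m' c, s₂ ⊔ update s₁ m' c, h₁, ht, h₂.sup ht, hp₁,
    le_update_iff.2 ⟨hm'c, fun _ _ => le_rfl⟩, le_sup_right, (sup_le h₂₃ ht₃).trans h₃q,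
    ⟨i, hi⟩, ⟨m', update_self _ _ _⟩, ⟨j, ?_⟩⟩
  rw [Pi.sup_apply, update_of_ne hji.ne, hj]
  exact sup_eq_left.2 (hj ▸ h₁₂ j)

lemma ChainReadable.bac_of_bca (hq : StrictMono q) (hac : a ≤ c) (hr : ChainReadable b c a p q) :
    ChainReadable b a c p q := by
  obtain ⟨s₁, s₂, s₃, h₁, h₂, h₃, hp₁, h₁₂, h₂₃, h₃q, ⟨i, hi⟩, ⟨m, hm⟩, ⟨j, hj⟩⟩ := hr
  obtain ⟨m', hcm', hmin, ht⟩ := hq.exists_update_of_ge (hm ▸ (h₂₃.trans h₃q) m)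
  have hs₂ : s₂ ≤ update q m' c :=
    le_update_iff.2 ⟨hm ▸ h₂.monotone (hmin m (hm ▸ (h₂₃.trans h₃q) m)),
      fun l _ => (h₂₃.trans h₃q) l⟩
  have hat : a ≤ update q m' c j := by
    rcases eq_or_ne j m' with rfl | hne
    · rwa [update_self]
    · rw [update_of_ne hne, ← hj]
      exact h₃q j
  refine ⟨s₁ ⊓ update q m' c, s₃ ⊓ update q m' c, update q m' c, h₁.inf ht, h₃.inf ht, ht,
    le_inf hp₁ (hp₁.trans (h₁₂.trans hs₂)), inf_le_inf_right _ (h₁₂.trans h₂₃), inf_le_right,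
    update_le_iff.2 ⟨hcm', fun _ _ => le_rfl⟩, ⟨i, ?_⟩, ⟨j, ?_⟩, ⟨m', update_self _ _ _⟩⟩
  · rw [Pi.inf_apply, hi]
    exact inf_eq_left.2 (hi ▸ (h₁₂.trans hs₂) i)
  · rw [Pi.inf_apply, hj]
    exact inf_eq_left.2 hat

lemma ChainReadable.acb_of_cab (hp : StrictMono p) (hac : a ≤ c) (hr : ChainReadable c a b p q) :
    ChainReadable a c b p q := by
  obtain ⟨s₁, s₂, s₃, h₁, h₂, h₃, hp₁, h₁₂, h₂₃, h₃q, ⟨m, hm⟩, ⟨j, hj⟩, ⟨i, hi⟩⟩ := hr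
  obtain ⟨j', hj'a, hmax, ht⟩ := hp.exists_update_of_le (hj ▸ (hp₁.trans h₁₂) j)
  have ht₂ : update p j' a ≤ s₂ :=
    update_le_iff.2 ⟨hj ▸ h₂.monotone (hmax j (hj ▸ (hp₁.trans h₁₂) j)),
      fun l _ => (hp₁.trans h₁₂) l⟩
  have htc : update p j' a m ≤ c := by
    rcases eq_or_ne m j' with rfl | hne
    · rwa [update_self]
    · rw [update_of_ne hne, ← hm]
      exact hp₁ m
  refine ⟨update p j' a, s₁ ⊔ update p j' a, s₃, ht, h₁.sup ht, h₃,
    le_update_iff.2 ⟨hj'a, fun _ _ => le_rfl⟩, le_sup_right, sup_le (h₁₂.trans h₂₃) (ht₂.trans h₂₃),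
    h₃q, ⟨j', update_self _ _ _⟩, ⟨m, ?_⟩, ⟨i, hi⟩⟩
  rw [Pi.sup_apply, hm]
  exact sup_eq_left.2 htc

lemma ChainReadable.cab_of_acb (hab : a ≤ b) (hbc : b < c) (hr : ChainReadable a c b p q) :
    ChainReadable c a b p q := by
  obtain ⟨s₁, s₂, s₃, h₁, h₂, h₃, hp₁, h₁₂, h₂₃, h₃q, ⟨j, hj⟩, ⟨m, hm⟩, ⟨i, hi⟩⟩ := hr
  obtain ⟨j', haj', hmin, ht⟩ := h₃.exists_update_of_ge (hab.trans hi.ge)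
  have hj'm : j' < m := by
    refine lt_of_le_of_lt (hmin i (hab.trans hi.ge)) (h₃.lt_iff_lt.1 ?_)
    rw [hi]
    exact hbc.trans_le (hm ▸ h₂₃ m)
  have hs₁ : s₁ ≤ update s₃ j' a :=
    le_update_iff.2 ⟨hj ▸ h₁.monotone (hmin j (hj ▸ (h₁₂.trans h₂₃) j)),
      fun l _ => (h₁₂.trans h₂₃) l⟩
  refine ⟨s₂ ⊓ update s₃ j' a, update s₃ j' a, s₃, h₂.inf ht, ht, h₃,
    le_inf (hp₁.trans h₁₂) (hp₁.trans hs₁), inf_le_right, update_le_iff.2 ⟨haj', fun _ _ => le_rfl⟩,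
    h₃q, ⟨m, ?_⟩, ⟨j', update_self _ _ _⟩, ⟨i, hi⟩⟩
  rw [Pi.inf_apply, update_of_ne hj'm.ne', hm]
  exact inf_eq_left.2 (hm ▸ h₂₃ m)

end

open Finset

lemma nthEl_eq_orderEmbOfFin {S : Finset ℕ} {k : ℕ} (h : S.card = k) (i : Fin k) :
    nthEl S i = S.orderEmbOfFin h i := by
  rw [nthEl, orderEmbOfFin_apply]
  exact List.getD_eq_getElem _ _ _

lemma fle_iff_orderEmbOfFin_le {S T : Finset ℕ} {k : ℕ} (hS : S.card = k) (hT : T.card = k) :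
    FLE S T ↔ ⇑(S.orderEmbOfFin hS) ≤ T.orderEmbOfFin hT := by
  refine ⟨fun h i => ?_, fun h => ⟨hS.trans hT.symm, fun i hi => ?_⟩⟩
  · rw [← nthEl_eq_orderEmbOfFin, ← nthEl_eq_orderEmbOfFin]
    exact h.2 i (hT ▸ i.2)
  · simpa only [nthEl_eq_orderEmbOfFin hS ⟨i, hT ▸ hi⟩, nthEl_eq_orderEmbOfFin hT ⟨i, hT ▸ hi⟩]
      using h ⟨i, hT ▸ hi⟩

lemma card_image_univ_of_strictMono {k : ℕ} {f : Fin k → ℕ} (hf : StrictMono f) :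
    (univ.image f).card = k := by
  rw [card_image_of_injective _ hf.injective, card_univ, Fintype.card_fin]

lemma orderEmbOfFin_image_univ {k : ℕ} {f : Fin k → ℕ} (hf : StrictMono f) :
    ⇑((univ.image f).orderEmbOfFin (card_image_univ_of_strictMono hf)) = f :=
  (orderEmbOfFin_unique _ (fun i => mem_image_of_mem f (mem_univ i)) hf).symm

lemma fle_image_univ_iff {k : ℕ} {f g : Fin k → ℕ} (hf : StrictMono f) (hg : StrictMono g) :
    FLE (univ.image f) (univ.image g) ↔ f ≤ g := by
  rw [fle_iff_orderEmbOfFin_le (card_image_univ_of_strictMono hf)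
    (card_image_univ_of_strictMono hg), orderEmbOfFin_image_univ hf, orderEmbOfFin_image_univ hg]

lemma readable_three_iff {n x y z : ℕ} {P Q : Finset ℕ} :
    Readable n [x, y, z] P Q ↔ ∃ S₁ S₂ S₃ : Finset ℕ,
      S₁ ⊆ Icc 1 n ∧ S₂ ⊆ Icc 1 n ∧ S₃ ⊆ Icc 1 n ∧
      FLE P S₁ ∧ FLE S₁ S₂ ∧ FLE S₂ S₃ ∧ FLE S₃ Q ∧ x ∈ S₁ ∧ y ∈ S₂ ∧ z ∈ S₃ := by
  constructor
  · rintro ⟨L, hlen, hsub, hchain, hmem⟩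
    obtain ⟨S₁, S₂, S₃, rfl⟩ := List.length_eq_three.1 hlen
    change List.IsChain FLE [P, S₁, S₂, S₃, Q] at hchain
    simp only [List.isChain_cons_cons, List.isChain_singleton, and_true] at hchain
    exact ⟨S₁, S₂, S₃, hsub _ (by simp), hsub _ (by simp), hsub _ (by simp), hchain.1,
      hchain.2.1, hchain.2.2.1, hchain.2.2.2, by simpa using hmem 0 (by simp),
      by simpa using hmem 1 (by simp), by simpa using hmem 2 (by simp)⟩
  · rintro ⟨S₁, S₂, S₃, h₁, h₂, h₃, hP₁, h₁₂, h₂₃, h₃Q, hx, hy, hz⟩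
    refine ⟨[S₁, S₂, S₃], rfl, ?_, ?_, ?_⟩
    · simp [h₁, h₂, h₃]
    · change List.IsChain FLE [P, S₁, S₂, S₃, Q]
      simp [hP₁, h₁₂, h₂₃, h₃Q]
    · intro i hi
      simp only [List.length_cons, List.length_nil] at hi
      interval_cases i <;> simpa

lemma readable_three_iff_chainReadable {n k x y z : ℕ} {P Q : Finset ℕ} (hP : P ⊆ Icc 1 n)
    (hQ : Q ⊆ Icc 1 n) (hPk : P.card = k) (hQk : Q.card = k) :
    Readable n [x, y, z] P Q ↔ ChainReadable x y z (P.orderEmbOfFin hPk) (Q.orderEmbOfFin hQk) := by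
  rw [readable_three_iff]
  constructor
  · rintro ⟨S₁, S₂, S₃, -, -, -, hP₁, h₁₂, h₂₃, h₃Q, hx, hy, hz⟩
    have hk₁ : S₁.card = k := hP₁.1.symm.trans hPk
    have hk₂ : S₂.card = k := h₁₂.1.symm.trans hk₁
    have hk₃ : S₃.card = k := h₂₃.1.symm.trans hk₂
    exact ⟨_, _, _, (S₁.orderEmbOfFin hk₁).strictMono, (S₂.orderEmbOfFin hk₂).strictMono,
      (S₃.orderEmbOfFin hk₃).strictMono, (fle_iff_orderEmbOfFin_le hPk hk₁).1 hP₁,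
      (fle_iff_orderEmbOfFin_le hk₁ hk₂).1 h₁₂, (fle_iff_orderEmbOfFin_le hk₂ hk₃).1 h₂₃,
      (fle_iff_orderEmbOfFin_le hk₃ hQk).1 h₃Q, by simpa, by simpa, by simpa⟩
  · rintro ⟨f, g, h, hf, hg, hh, hpf, hfg, hgh, hhq, hx, hy, hz⟩
    have hsub : ∀ {s : Fin k → ℕ}, P.orderEmbOfFin hPk ≤ s → s ≤ Q.orderEmbOfFin hQk →
        univ.image s ⊆ Icc 1 n := by
      intro s hps hsq
      simp only [subset_iff, mem_image, mem_univ, true_and, mem_Icc, forall_exists_index,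
        forall_apply_eq_imp_iff]
      exact fun i => ⟨(mem_Icc.1 (hP (orderEmbOfFin_mem P hPk i))).1.trans (hps i),
        (hsq i).trans (mem_Icc.1 (hQ (orderEmbOfFin_mem Q hQk i))).2⟩
    have hPf := (fle_image_univ_iff (P.orderEmbOfFin hPk).strictMono hf).2 hpf
    have hhQ := (fle_image_univ_iff hh (Q.orderEmbOfFin hQk).strictMono).2 hhq
    rw [image_orderEmbOfFin_univ] at hPf hhQ
    exact ⟨univ.image f, univ.image g, univ.image h, hsub hpf (hfg.trans (hgh.trans hhq)),
      hsub (hpf.trans hfg) (hgh.trans hhq), hsub (hpf.trans (hfg.trans hgh)) hhq, hPf,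
      (fle_image_univ_iff hf hg).2 hfg, (fle_image_univ_iff hg hh).2 hgh, hhQ,
      by simpa using hx, by simpa using hy, by simpa using hz⟩

/-- for each Knuth relation `u = v` and all subsets `P, Q` of `{1,…,n}`
with `|P| = |Q|`, the word `u` is readable from `P` to `Q` iff `v` is: for `a < b ≤ c`,
`bca` is readable iff `bac` is; and for `a ≤ b < c`, `cab` is readable iff `acb` is. -/
theorem stmt9 (n : ℕ) (P Q : Finset ℕ) (hP : P ⊆ Finset.Icc 1 n)
    (hQ : Q ⊆ Finset.Icc 1 n) (hcard : P.card = Q.card) :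
    (∀ a b c : ℕ, 1 ≤ a → a < b → b ≤ c → c ≤ n →
      (Readable n [b, c, a] P Q ↔ Readable n [b, a, c] P Q)) ∧
    (∀ a b c : ℕ, 1 ≤ a → a ≤ b → b < c → c ≤ n →
      (Readable n [c, a, b] P Q ↔ Readable n [a, c, b] P Q)) := by
  have hp := (P.orderEmbOfFin rfl).strictMono
  have hq := (Q.orderEmbOfFin hcard.symm).strictMono
  simp only [readable_three_iff_chainReadable hP hQ rfl hcard.symm]
  refine ⟨fun a b c _ hab hbc _ => ?_, fun a b c _ hab hbc _ => ?_⟩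
  · exact ⟨.bac_of_bca hq (hab.le.trans hbc), .bca_of_bac hab hbc⟩
  · exact ⟨.acb_of_cab hp (hab.trans hbc.le), .cab_of_acb hab hbc⟩
end
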